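/- arXiv:math-ph/0605023 — 2 statements merged into one kernel-verified Lean document; each statement's English description precedes it below -/
import Mathlib

section
/- For all 3×3 real matrices A, B, C with A and C symmetric, all λ ∈ SO(3) and all δ ∈ ℝ³, the Killing tensor field K_{A,B,C} transforms under the isometry x = λ x̃ + δ into the member of the same family with the transformed parameters: for every x̃ ∈ ℝ³, λᵀ · K_{A,B,C}(λ x̃ + δ) · λ = K_{Ã,B̃,C̃}(x̃), where Ã = λᵀAλ + λᵀBμ + μᵀBᵀλ + μᵀCμ, B̃ = λᵀBλ + μᵀCλ, C̃ = λᵀCλ with μ = W_δ λ. -/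
open Matrix

/-- 3×3 real matrices. -/
abbrev M3 := Matrix (Fin 3) (Fin 3) ℝ

/-- The cross-product matrix `Sₓ`, satisfying `Sₓ v = x × v`. -/
def Smat (x : Fin 3 → ℝ) : M3 :=
  !![0, -x 2, x 1; x 2, 0, -x 0; -x 1, x 0, 0]

/-- The Killing tensor field `K_{A,B,C}(x) = A + Sₓ Bᵀ + B Sₓᵀ + Sₓ C Sₓᵀ`. -/
def KABC (A B C : M3) (x : Fin 3 → ℝ) : M3 :=
  A + Smat x * Bᵀ + B * (Smat x)ᵀ + Smat x * C * (Smat x)ᵀ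

/-- Membership in SO(3). -/
def SO3 (l : M3) : Prop := lᵀ * l = 1 ∧ l.det = 1

/-- The antisymmetric matrix `W_δ` with rows `(0, δ₃, −δ₂)`, `(−δ₃, 0, δ₁)`,
`(δ₂, −δ₁, 0)`. -/
def Wmat (δ : Fin 3 → ℝ) : M3 :=
  !![0, δ 2, -δ 1; -δ 2, 0, δ 0; δ 1, -δ 0, 0]

/-- Rotational equivariance of the cross-product matrix: for `l ∈ SO(3)`,
`S_{l x} = l Sₓ lᵀ`. -/
lemma Smat_rot (l : M3) (hl : SO3 l) (x : Fin 3 → ℝ) :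
    Smat (l.mulVec x) = l * Smat x * lᵀ := by
  have hadj : l.adjugate = lᵀ := by
    calc l.adjugate = lᵀ * (l * l.adjugate) := by rw [← mul_assoc, hl.1, one_mul]
    _ = lᵀ := by rw [Matrix.mul_adjugate, hl.2, one_smul, mul_one]
  rw [Matrix.adjugate_fin_three] at hadj
  have c00 : l 1 1 * l 2 2 - l 1 2 * l 2 1 = l 0 0 := by
    simpa using congrFun (congrFun hadj 0) 0
  have c01 : -(l 1 0 * l 2 2) + l 1 2 * l 2 0 = l 0 1 := by
    simpa using congrFun (congrFun hadj 1) 0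
  have c02 : l 1 0 * l 2 1 - l 1 1 * l 2 0 = l 0 2 := by
    simpa using congrFun (congrFun hadj 2) 0
  have c10 : -(l 0 1 * l 2 2) + l 0 2 * l 2 1 = l 1 0 := by
    simpa using congrFun (congrFun hadj 0) 1
  have c11 : l 0 0 * l 2 2 - l 0 2 * l 2 0 = l 1 1 := by
    simpa using congrFun (congrFun hadj 1) 1
  have c12 : -(l 0 0 * l 2 1) + l 0 1 * l 2 0 = l 1 2 := by
    simpa using congrFun (congrFun hadj 2) 1
  have c20 : l 0 1 * l 1 2 - l 0 2 * l 1 1 = l 2 0 := by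
    simpa using congrFun (congrFun hadj 0) 2
  have c21 : -(l 0 0 * l 1 2) + l 0 2 * l 1 0 = l 2 1 := by
    simpa using congrFun (congrFun hadj 1) 2
  have c22 : l 0 0 * l 1 1 - l 0 1 * l 1 0 = l 2 2 := by
    simpa using congrFun (congrFun hadj 2) 2
  ext i j
  fin_cases i <;> fin_cases j <;>
    simp [Smat, Matrix.mulVec, Matrix.mul_apply, Fin.sum_univ_three, dotProduct,
      Matrix.transpose_apply]
  · ring
  · linear_combination x 0 * c20 + x 1 * c21 + x 2 * c22
  · linear_combination -(x 0 * c10) - x 1 * c11 - x 2 * c12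
  · linear_combination -(x 0 * c20) - x 1 * c21 - x 2 * c22
  · ring
  · linear_combination x 0 * c00 + x 1 * c01 + x 2 * c02
  · linear_combination x 0 * c10 + x 1 * c11 + x 2 * c12
  · linear_combination -(x 0 * c00) - x 1 * c01 - x 2 * c02
  · ring

/-- `Smat` is additive. -/
lemma Smat_add (a b : Fin 3 → ℝ) : Smat (a + b) = Smat a + Smat b := by
  ext i j; fin_cases i <;> fin_cases j <;> simp [Smat] <;> ring

/-- `W_δ = (S_δ)ᵀ`. -/
lemma Wmat_eq (δ : Fin 3 → ℝ) : Wmat δ = (Smat δ)ᵀ := by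
  ext i j; fin_cases i <;> fin_cases j <;> simp [Smat, Wmat]

/-- STATEMENT 2: under the isometry `x = λ x̃ + δ`, the Killing tensor `K_{A,B,C}`
transforms into `K_{Ã,B̃,C̃}` with `Ã = λᵀAλ + λᵀBμ + μᵀBᵀλ + μᵀCμ`,
`B̃ = λᵀBλ + μᵀCλ`, `C̃ = λᵀCλ`, where `μ = W_δ λ`. -/
theorem KABC_transformation_rule
    (A B C : M3) (hA : A.IsSymm) (hC : C.IsSymm)
    (l : M3) (hl : SO3 l) (δ : Fin 3 → ℝ) (xt : Fin 3 → ℝ) :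
    lᵀ * KABC A B C (l.mulVec xt + δ) * l =
      KABC
        (lᵀ * A * l + lᵀ * B * (Wmat δ * l) + (Wmat δ * l)ᵀ * Bᵀ * l
          + (Wmat δ * l)ᵀ * C * (Wmat δ * l))
        (lᵀ * B * l + (Wmat δ * l)ᵀ * C * l)
        (lᵀ * C * l) xt := by
  have h1 : ∀ X : M3, lᵀ * (l * X) = X := fun X => by
    rw [← mul_assoc, hl.1, one_mul]
  have h2 : ∀ X : M3, l * (lᵀ * X) = X := fun X => by
    rw [← mul_assoc, mul_eq_one_comm.mp hl.1, one_mul]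
  have h3 : lᵀ * l = 1 := hl.1
  have h4 : l * lᵀ = 1 := mul_eq_one_comm.mp hl.1
  have hCs : Cᵀ = C := hC
  simp only [KABC, Smat_add, Smat_rot l hl, Wmat_eq, Matrix.transpose_mul,
    Matrix.transpose_add, Matrix.transpose_transpose, hCs]
  simp only [Matrix.mul_add, Matrix.add_mul, Matrix.mul_assoc, h1, h2, h3, h4,
    Matrix.mul_one, Matrix.one_mul]
  abel
end

section
/- Canonical form of a helicoidal Killing vector: if A, C ∈ ℝ³ with C ≠ 0, then there exist λ ∈ SO(3) and δ ∈ ℝ³ such that λᵀ(A + δ × C) = (0, 0, ⟨A,C⟩/‖C‖) and λᵀC = (0, 0, ‖C‖); hence λᵀ V_{A,C}(λ x̃ + δ) = ã·e₃ + x̃ × (c̃·e₃) with ã = ⟨A,C⟩/‖C‖ and c̃ = ‖C‖. If in addition ⟨A, C⟩ ≠ 0 (i.e. Δ₁ ≠ 0 and Δ₂ ≠ 0), then both ã ≠ 0 and c̃ ≠ 0. -/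
open Matrix

/-- The Killing vector field `V_{A,C}(x) = A + x × C`. -/
def VAC (A C : Fin 3 → ℝ) (x : Fin 3 → ℝ) : Fin 3 → ℝ :=
  A + crossProduct x C

/-!
Translating by `δ = (A × C)/‖C‖²` kills the component of `A` orthogonal to `C`, because
`(A × C) × C = ⟨A,C⟩ C - ‖C‖² A`; so `A + δ × C = (⟨A,C⟩/‖C‖²) C`. A rotation `λ` with
`λ e₃ = C/‖C‖` exists: its columns are an orthonormal frame `(w × u, w, u)` with `u = C/‖C‖`
and `w ⊥ C`. Since rotations commute with the cross product, pulling `V_{A,C}` back along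
`x̃ ↦ λ x̃ + δ` gives the Killing field with data `λᵀ(A + δ × C)` and `λᵀ C`, both multiples of `e₃`.
-/

theorem transpose_mulVec_cross_mulVec {R : Type*} [CommRing R] (M : Matrix (Fin 3) (Fin 3) R)
    (u v : Fin 3 → R) : Mᵀ *ᵥ ((M *ᵥ u) ⨯₃ (M *ᵥ v)) = M.det • (u ⨯₃ v) := by
  ext i
  fin_cases i <;>
    simp only [mulVec, dotProduct, transpose_apply, cross_apply, Fin.sum_univ_three,
      cons_val_zero, cons_val_one, cons_val, det_fin_three, Pi.smul_apply, smul_eq_mul,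
      Fin.isValue, Fin.zero_eta, Fin.mk_one, Fin.reduceFinMk] <;>
    ring

theorem add_smul_cross_cross_eq_smul {K : Type*} [Field K] (A C : Fin 3 → K)
    (hC : C ⬝ᵥ C ≠ 0) :
    A + ((C ⬝ᵥ C)⁻¹ • (A ⨯₃ C)) ⨯₃ C = (A ⬝ᵥ C / C ⬝ᵥ C) • C := by
  rw [map_smul, LinearMap.smul_apply, cross_cross_eq_smul_sub_smul, smul_sub, smul_smul,
    smul_smul, inv_mul_cancel₀ hC, one_smul, div_eq_inv_mul, add_sub_cancel]

theorem inv_sqrt_smul_dotProduct_self_eq_one {ι : Type*} [Fintype ι] {w : ι → ℝ} (hw : w ≠ 0) :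
    ((√(w ⬝ᵥ w))⁻¹ • w) ⬝ᵥ ((√(w ⬝ᵥ w))⁻¹ • w) = 1 := by
  have hpos : 0 < w ⬝ᵥ w := dotProduct_self_star_pos_iff.mpr hw
  rw [smul_dotProduct, dotProduct_smul, smul_eq_mul, smul_eq_mul, ← mul_assoc, ← mul_inv,
    Real.mul_self_sqrt hpos.le, inv_mul_cancel₀ hpos.ne']

theorem exists_dotProduct_self_eq_one_dotProduct_eq_zero {ι : Type*} [Fintype ι] [Nontrivial ι]
    (C : ι → ℝ) : ∃ w, w ⬝ᵥ w = 1 ∧ w ⬝ᵥ C = 0 := by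
  obtain ⟨w, hw, hwC⟩ := exists_ne_zero_dotProduct_eq_zero C
  exact ⟨_, inv_sqrt_smul_dotProduct_self_eq_one hw, by rw [smul_dotProduct, hwC, smul_zero]⟩

theorem SO3.transpose_mulVec_cross {l : M3} (hl : SO3 l) (x v : Fin 3 → ℝ) :
    lᵀ *ᵥ ((l *ᵥ x) ⨯₃ v) = x ⨯₃ (lᵀ *ᵥ v) := by
  have hv : l *ᵥ (lᵀ *ᵥ v) = v := by rw [mulVec_mulVec, mul_eq_one_comm.mp hl.1, one_mulVec]
  conv_lhs => rw [← hv]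
  rw [transpose_mulVec_cross_mulVec, hl.2, one_smul]

theorem SO3_transpose_of_orthonormal {w u : Fin 3 → ℝ} (hw : w ⬝ᵥ w = 1) (hu : u ⬝ᵥ u = 1)
    (hwu : w ⬝ᵥ u = 0) : SO3 (of ![w ⨯₃ u, w, u])ᵀ := by
  have hcross : (w ⨯₃ u) ⬝ᵥ (w ⨯₃ u) = 1 := by
    rw [cross_dot_cross, hw, hu, hwu, dotProduct_comm u w, hwu]; ring
  have hcross_w : (w ⨯₃ u) ⬝ᵥ w = 0 := by rw [dotProduct_comm, dot_self_cross]
  have hcross_u : (w ⨯₃ u) ⬝ᵥ u = 0 := by rw [dotProduct_comm, dot_cross_self]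
  refine ⟨?_, ?_⟩
  · rw [transpose_transpose]
    ext i j
    change ![w ⨯₃ u, w, u] i ⬝ᵥ ![w ⨯₃ u, w, u] j = (1 : M3) i j
    fin_cases i <;> fin_cases j <;>
      simp [dot_self_cross, dot_cross_self, dotProduct_comm u w, hw, hu, hwu, hcross,
        hcross_w, hcross_u]
  · rw [det_transpose, ← hcross, triple_product_eq_det]
    rfl

theorem exists_SO3_transpose_mulVec_eq (C : Fin 3 → ℝ) (hC : C ≠ 0) :
    ∃ l : M3, SO3 l ∧ lᵀ *ᵥ C = ![0, 0, √(C ⬝ᵥ C)] := by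
  set u := (√(C ⬝ᵥ C))⁻¹ • C
  have hn : √(C ⬝ᵥ C) ≠ 0 := Real.sqrt_ne_zero'.mpr (dotProduct_self_star_pos_iff.mpr hC)
  have hCu : C = √(C ⬝ᵥ C) • u := (smul_inv_smul₀ hn C).symm
  have hu : u ⬝ᵥ u = 1 := inv_sqrt_smul_dotProduct_self_eq_one hC
  obtain ⟨w, hw, hwC⟩ := exists_dotProduct_self_eq_one_dotProduct_eq_zero C
  have hwu : w ⬝ᵥ u = 0 := by rw [dotProduct_smul, hwC, smul_zero]
  refine ⟨_, SO3_transpose_of_orthonormal hw hu hwu, ?_⟩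
  rw [transpose_transpose, hCu]
  ext i
  change ![w ⨯₃ u, w, u] i ⬝ᵥ (√(C ⬝ᵥ C) • u) = _
  fin_cases i <;> simp [hwu, hu, dotProduct_comm _ u, dot_cross_self]

/-- STATEMENT 7: canonical form of a helicoidal Killing vector: if `C ≠ 0`, there
are `λ ∈ SO(3)` and `δ ∈ ℝ³` with `λᵀ(A + δ × C) = (0,0,⟨A,C⟩/‖C‖)` and
`λᵀC = (0,0,‖C‖)`, so the pulled-back field is `ã e₃ + x̃ × (c̃ e₃)` with
`ã = ⟨A,C⟩/‖C‖`, `c̃ = ‖C‖`; if moreover `⟨A,C⟩ ≠ 0` then `ã ≠ 0` and `c̃ ≠ 0`. -/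
theorem helicoidal_Killing_vector_canonical_form
    (A C : Fin 3 → ℝ) (hC : C ≠ 0) :
    ∃ (l : M3) (δ : Fin 3 → ℝ), SO3 l ∧
      lᵀ.mulVec (A + crossProduct δ C) =
        ![0, 0, A ⬝ᵥ C / Real.sqrt (C ⬝ᵥ C)] ∧
      lᵀ.mulVec C = ![0, 0, Real.sqrt (C ⬝ᵥ C)] ∧
      (∀ xt : Fin 3 → ℝ,
        lᵀ.mulVec (VAC A C (l.mulVec xt + δ)) =
          ![0, 0, A ⬝ᵥ C / Real.sqrt (C ⬝ᵥ C)]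
            + crossProduct xt ![0, 0, Real.sqrt (C ⬝ᵥ C)]) ∧
      (A ⬝ᵥ C ≠ 0 →
        A ⬝ᵥ C / Real.sqrt (C ⬝ᵥ C) ≠ 0 ∧ Real.sqrt (C ⬝ᵥ C) ≠ 0) := by
  obtain ⟨l, hl, hlC⟩ := exists_SO3_transpose_mulVec_eq C hC
  have hCC : 0 < C ⬝ᵥ C := dotProduct_self_star_pos_iff.mpr hC
  have hn : √(C ⬝ᵥ C) ≠ 0 := Real.sqrt_ne_zero'.mpr hCC
  have hscale : A ⬝ᵥ C / C ⬝ᵥ C * √(C ⬝ᵥ C) = A ⬝ᵥ C / √(C ⬝ᵥ C) := by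
    field_simp
    rw [Real.sq_sqrt hCC.le]
  set δ := (C ⬝ᵥ C)⁻¹ • A ⨯₃ C
  have hδ : lᵀ *ᵥ (A + δ ⨯₃ C) = ![0, 0, A ⬝ᵥ C / √(C ⬝ᵥ C)] := by
    rw [add_smul_cross_cross_eq_smul A C hCC.ne', mulVec_smul, hlC, smul_vec3, smul_zero,
      smul_eq_mul, hscale]
  refine ⟨l, δ, hl, hδ, hlC, fun xt => ?_, fun h => ⟨div_ne_zero h hn, hn⟩⟩
  have hsplit : A + (l *ᵥ xt + δ) ⨯₃ C = (A + δ ⨯₃ C) + (l *ᵥ xt) ⨯₃ C := by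
    rw [map_add, LinearMap.add_apply]; abel
  rw [VAC, hsplit, mulVec_add, hδ, hl.transpose_mulVec_cross, hlC]
end
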